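/- For n ≥ 3, the groups TVPₙ and TVHₙ are not isomorphic, because their abelianizations Z^{n(n-1)/2} ⊕ (Z/2Z)ⁿ and Z ⊕ (Z/2Z)ⁿ are not isomorphic when n(n-1)/2 > 1. -/
import Mathlib


/-- Generators: `Sum.inl ⟨(i,j), h⟩` is λ_{ij} (resp. x_{ij}), `Sum.inr j` is γⱼ. -/
abbrev TVGen (n : ℕ) := {p : Fin n × Fin n // p.1 ≠ p.2} ⊕ Fin n

def lamP {n : ℕ} (i j : Fin n) (h : i ≠ j) : FreeGroup (TVGen n) :=
  FreeGroup.of (Sum.inl ⟨(i, j), h⟩)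

def gamP {n : ℕ} (i : Fin n) : FreeGroup (TVGen n) :=
  FreeGroup.of (Sum.inr i)

/-- Defining relations of the twisted virtual pure braid group TVPₙ. -/
def tvpRels (n : ℕ) : Set (FreeGroup (TVGen n)) :=
  {r |
    (∃ (i j k l : Fin n) (hij : i ≠ j) (hkl : k ≠ l), i ≠ k ∧ i ≠ l ∧ j ≠ k ∧ j ≠ l ∧
      r = lamP i j hij * lamP k l hkl * (lamP k l hkl * lamP i j hij)⁻¹) ∨
    (∃ (i j k : Fin n) (hki : k ≠ i) (hkj : k ≠ j) (hij : i ≠ j),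
      r = lamP k i hki * lamP k j hkj * lamP i j hij *
        (lamP i j hij * lamP k j hkj * lamP k i hki)⁻¹) ∨
    (∃ i, r = gamP i ^ 2) ∨
    (∃ (i j : Fin n), i ≠ j ∧ r = gamP i * gamP j * (gamP j * gamP i)⁻¹) ∨
    (∃ (i j k : Fin n) (hij : i ≠ j), i ≠ k ∧ j ≠ k ∧
      r = lamP i j hij * gamP k * (gamP k * lamP i j hij)⁻¹) ∨
    (∃ (i j : Fin n) (hij : i ≠ j),
      r = lamP i j hij *
        (gamP i * gamP j * lamP j i hij.symm * gamP j * gamP i)⁻¹)}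

/-- Defining relations of the group TVHₙ (same generator names, x in place of λ). -/
def tvhRels (n : ℕ) : Set (FreeGroup (TVGen n)) :=
  {r |
    (∃ (i j k l : Fin n) (hij : i ≠ j) (hkl : k ≠ l), i ≠ k ∧ i ≠ l ∧ j ≠ k ∧ j ≠ l ∧
      r = lamP i j hij * lamP k l hkl * (lamP k l hkl * lamP i j hij)⁻¹) ∨
    (∃ (i j k : Fin n) (hik : i ≠ k) (hkj : k ≠ j) (_hij : i ≠ j),
      r = lamP i k hik * lamP k j hkj * lamP i k hik *
        (lamP k j hkj * lamP i k hik * lamP k j hkj)⁻¹) ∨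
    (∃ i, r = gamP i ^ 2) ∨
    (∃ (i j : Fin n), i ≠ j ∧ r = gamP i * gamP j * (gamP j * gamP i)⁻¹) ∨
    (∃ (i j k : Fin n) (hij : i ≠ j), i ≠ k ∧ j ≠ k ∧
      r = lamP i j hij * gamP k * (gamP k * lamP i j hij)⁻¹) ∨
    (∃ (i j : Fin n) (hij : i ≠ j),
      r = lamP i j hij *
        (gamP i * gamP j * lamP j i hij.symm * gamP j * gamP i)⁻¹)}

namespace Stmt5Aux

abbrev K : Type := Multiplicative (ZMod 3)

lemma sq_eq_one {x : K} (h : x ^ 2 = 1) : x = 1 := by revert h; revert x; decide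

variable {n : ℕ}

lemma mk_rel_one {rels : Set (FreeGroup (TVGen n))} {r} (hr : r ∈ rels) :
    PresentedGroup.mk rels r = 1 :=
  (QuotientGroup.eq_one_iff r).2 (Subgroup.subset_normalClosure hr)

/-- a third element -/
lemma third (hn : 3 ≤ n) (i k : Fin n) : ∃ m : Fin n, m ≠ i ∧ m ≠ k := by
  by_contra hc
  push_neg at hc
  have hsub : (Finset.univ : Finset (Fin n)) ⊆ {i, k} := by
    intro m _
    simp only [Finset.mem_insert, Finset.mem_singleton]
    rcases eq_or_ne m i with h | h
    · exact Or.inl h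
    · exact Or.inr (hc m h)
  have h1 := Finset.card_le_card hsub
  have h2 : ({i, k} : Finset (Fin n)).card ≤ 2 := Finset.card_le_two
  simp [Finset.card_univ] at h1
  omega

section TVH

variable (φ : PresentedGroup (tvhRels n) →* K)

/-- value of φ on the generator x_{ij} (1 on the diagonal). -/
noncomputable def A (i j : Fin n) : K :=
  if h : i = j then 1 else φ ((PresentedGroup.mk (tvhRels n)) (lamP i j h))

lemma A_eq {i j : Fin n} (h : i ≠ j) :
    A φ i j = φ ((PresentedGroup.mk (tvhRels n)) (lamP i j h)) := by
  simp [A, h]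

lemma gam_one (i : Fin n) : φ ((PresentedGroup.mk (tvhRels n)) (gamP i)) = 1 := by
  apply sq_eq_one
  rw [← map_pow, ← map_pow]
  rw [mk_rel_one (Or.inr (Or.inr (Or.inl ⟨i, rfl⟩)))]
  exact map_one φ

lemma A_symm {i j : Fin n} (h : i ≠ j) : A φ i j = A φ j i := by
  have hr := mk_rel_one (rels := tvhRels n)
    (Or.inr (Or.inr (Or.inr (Or.inr (Or.inr ⟨i, j, h, rfl⟩)))))
  have := congrArg φ (congrArg (PresentedGroup.mk (tvhRels n)) (rfl :
      (lamP i j h * (gamP i * gamP j * lamP j i h.symm * gamP j * gamP i)⁻¹) = _))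
  have h1 : φ ((PresentedGroup.mk (tvhRels n))
      (lamP i j h * (gamP i * gamP j * lamP j i h.symm * gamP j * gamP i)⁻¹)) = 1 := by
    rw [hr]; exact map_one φ
  rw [map_mul, map_inv, map_mul, map_inv] at h1
  simp only [map_mul, gam_one] at h1
  rw [A_eq φ h, A_eq φ h.symm]
  simpa [mul_inv_eq_one] using h1

lemma A_rel {i k j : Fin n} (hik : i ≠ k) (hkj : k ≠ j) (hij : i ≠ j) :
    A φ i k = A φ k j := by
  have hr := mk_rel_one (rels := tvhRels n)
    (Or.inr (Or.inl ⟨i, j, k, hik, hkj, hij, rfl⟩))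
  have h1 : φ ((PresentedGroup.mk (tvhRels n))
      (lamP i k hik * lamP k j hkj * lamP i k hik *
        (lamP k j hkj * lamP i k hik * lamP k j hkj)⁻¹)) = 1 := by
    rw [hr]; exact map_one φ
  simp only [map_mul, map_inv] at h1
  rw [mul_inv_eq_one] at h1
  rw [A_eq φ hik, A_eq φ hkj]
  set x := φ ((PresentedGroup.mk (tvhRels n)) (lamP i k hik)) with hx
  set y := φ ((PresentedGroup.mk (tvhRels n)) (lamP k j hkj)) with hy
  have h2 : x * (x * y) = y * (x * y) := by
    calc x * (x * y) = x * (y * x) := by rw [mul_comm x y]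
    _ = y * (x * y) := by rw [← mul_assoc, ← mul_assoc]; exact h1
  exact mul_right_cancel h2

lemma A_change2 {i j j' : Fin n} (hij : i ≠ j) (hij' : i ≠ j') (hjj' : j ≠ j') :
    A φ i j = A φ i j' := by
  rw [A_symm φ hij]
  exact A_rel φ hij.symm hij' hjj'

lemma A_change1 {i i' j : Fin n} (hij : i ≠ j) (hi'j : i' ≠ j) (hii' : i ≠ i') :
    A φ i j = A φ i' j := by
  rw [A_symm φ hij, A_symm φ hi'j]
  exact A_change2 φ hij.symm hi'j.symm hii'

lemma A_all (hn : 3 ≤ n) {i j k l : Fin n} (hij : i ≠ j) (hkl : k ≠ l) :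
    A φ i j = A φ k l := by
  rcases eq_or_ne i k with hik | hik
  · subst hik
    rcases eq_or_ne j l with hjl | hjl
    · subst hjl; rfl
    · exact A_change2 φ hij hkl hjl
  · obtain ⟨m, hmi, hmk⟩ := third hn i k
    have h1 : A φ i j = A φ i m := by
      rcases eq_or_ne j m with hjm | hjm
      · rw [hjm]
      · exact A_change2 φ hij hmi.symm hjm
    have h2 : A φ i m = A φ k m := A_change1 φ hmi.symm hmk.symm hik
    have h3 : A φ k m = A φ k l := by
      rcases eq_or_ne m l with hml | hml
      · rw [hml]
      · exact A_change2 φ hmk.symm hkl hml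
    rw [h1, h2, h3]

end TVH

end Stmt5Aux

namespace Stmt5Aux

section TVP

variable {n : ℕ} (e0 e1 e2 : Fin n)

/-- generator values for a homomorphism TVPₙ → K. -/
def fP (a b : K) : TVGen n → K :=
  Sum.elim
    (fun p => if ({p.1.1, p.1.2} : Finset (Fin n)) = {e0, e1} then a
      else if ({p.1.1, p.1.2} : Finset (Fin n)) = {e0, e2} then b else 1)
    (fun _ => 1)

lemma fP_symm (a b : K) (i j : Fin n) (h : i ≠ j) :
    fP e0 e1 e2 a b (Sum.inl ⟨(j, i), h.symm⟩) = fP e0 e1 e2 a b (Sum.inl ⟨(i, j), h⟩) := by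
  simp only [fP, Sum.elim_inl]
  rw [Finset.pair_comm j i]

lemma fP_rels (a b : K) :
    ∀ r ∈ tvpRels n, FreeGroup.lift (fP e0 e1 e2 a b) r = 1 := by
  rintro r (⟨i, j, k, l, hij, hkl, _, _, _, _, rfl⟩ |
    ⟨i, j, k, hki, hkj, hij, rfl⟩ | ⟨i, rfl⟩ | ⟨i, j, _, rfl⟩ |
    ⟨i, j, k, hij, _, _, rfl⟩ | ⟨i, j, hij, rfl⟩) <;>
    simp only [lamP, gamP, map_mul, map_inv, map_pow, FreeGroup.lift_apply_of]
  · rw [mul_inv_eq_one]; exact mul_comm _ _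
  · rw [mul_inv_eq_one]
    simp only [mul_comm, mul_left_comm]
  · simp [fP]
  · simp [fP]
  · simp only [fP, Sum.elim_inr]
    rw [mul_inv_eq_one]; exact mul_comm _ _
  · simp only [fP, Sum.elim_inr, Sum.elim_inl, mul_one, one_mul]
    rw [mul_inv_eq_one, Finset.pair_comm j i]

/-- the homomorphism TVPₙ → K with generator values `fP a b`. -/
def psiP (a b : K) : PresentedGroup (tvpRels n) →* K :=
  PresentedGroup.toGroup (fP_rels e0 e1 e2 a b)

lemma psiP_inj (h01 : e0 ≠ e1) (h02 : e0 ≠ e2) (h12 : e1 ≠ e2) :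
    Function.Injective (fun ab : K × K => psiP e0 e1 e2 ab.1 ab.2) := by
  intro ⟨a, b⟩ ⟨a', b'⟩ h
  have hne : ({e0, e2} : Finset (Fin n)) ≠ {e0, e1} := by
    intro hF
    have : e2 ∈ ({e0, e1} : Finset (Fin n)) := by
      rw [← hF]; simp
    simp only [Finset.mem_insert, Finset.mem_singleton] at this
    rcases this with h' | h'
    · exact h02 h'.symm
    · exact h12 h'.symm
  have h1 := congrArg (fun φ => φ (PresentedGroup.of (Sum.inl ⟨(e0, e1), h01⟩))) h
  have h2 := congrArg (fun φ => φ (PresentedGroup.of (Sum.inl ⟨(e0, e2), h02⟩))) h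
  simp only [psiP, PresentedGroup.toGroup.of, fP, Sum.elim_inl, if_pos rfl, if_neg hne] at h1 h2
  simp_all

end TVP

/-- injectivity of evaluation on TVH side. -/
lemma tvh_inj {n : ℕ} (hn : 3 ≤ n) {e0 e1 : Fin n} (h01 : e0 ≠ e1) :
    Function.Injective (fun φ : PresentedGroup (tvhRels n) →* K => A φ e0 e1) := by
  intro φ ψ h
  apply PresentedGroup.ext
  rintro (⟨⟨i, j⟩, hij⟩ | i)
  · show φ ((PresentedGroup.mk (tvhRels n)) (lamP i j hij)) =
      ψ ((PresentedGroup.mk (tvhRels n)) (lamP i j hij))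
    rw [← A_eq φ hij, ← A_eq ψ hij, A_all φ hn hij h01, A_all ψ hn hij h01]
    exact h
  · show φ ((PresentedGroup.mk (tvhRels n)) (gamP i)) =
      ψ ((PresentedGroup.mk (tvhRels n)) (gamP i))
    rw [gam_one, gam_one]

end Stmt5Aux


open Stmt5Aux

/-- For n ≥ 3 the groups TVPₙ and TVHₙ are not isomorphic. -/
theorem stmt5 (n : ℕ) (hn : 3 ≤ n) :
    IsEmpty (PresentedGroup (tvpRels n) ≃* PresentedGroup (tvhRels n)) := by
  constructor
  intro e
  have h01 : (⟨0, by omega⟩ : Fin n) ≠ ⟨1, by omega⟩ := by simp [Fin.ext_iff]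
  have h02 : (⟨0, by omega⟩ : Fin n) ≠ ⟨2, by omega⟩ := by simp [Fin.ext_iff]
  have h12 : (⟨1, by omega⟩ : Fin n) ≠ ⟨2, by omega⟩ := by simp [Fin.ext_iff]
  have hcomp : Function.Injective
      (fun φ : PresentedGroup (tvpRels n) →* K => φ.comp e.symm.toMonoidHom) := by
    intro φ1 φ2 hφ
    apply MonoidHom.ext
    intro y
    have := DFunLike.congr_fun hφ (e y)
    simpa using this
  have hinj := (tvh_inj hn h01).comp
    (hcomp.comp (psiP_inj ⟨0, by omega⟩ ⟨1, by omega⟩ ⟨2, by omega⟩ h01 h02 h12))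
  have hc := Fintype.card_le_of_injective _ hinj
  have c1 : Fintype.card K = 3 := rfl
  rw [Fintype.card_prod, c1] at hc
  omega
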